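/- arXiv:1205.0856 — 7 statements merged into one kernel-verified Lean document; each statement's English description precedes it below -/
import Mathlib

section
/- (Weak duality.) Let y ∈ ℝ^K satisfy Dy ≤ b, Hy = e_n, and y ∘ (y − e_K) ≤ 0. Let σ ∈ ℝ^m with σ ≥ 0, τ ∈ ℝⁿ, and μ ∈ ℝ^K with μ ≥ 0 and G(μ) positive definite. Then P^d(σ,τ,μ) ≤ ½ yᵀBy − hᵀy. -/
/-!
Weak duality by completing the square: for `G(μ) ≻ 0` the Lagrangian
`½ yᵀG(μ)y − F(σ,τ,μ)ᵀy − σᵀb − τᵀe_n` is bounded below by its minimum `P^d(σ,τ,μ)`, and at a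
primal feasible `y` it differs from the primal objective `½ yᵀBy − hᵀy` by
`σᵀ(Dy − b) + μᵀ(y ∘ (y − e_K))`, a sum of two nonpositive terms.
-/

open Matrix

theorem Matrix.PosSemidef.neg_half_dotProduct_nonsing_inv_mulVec_le {ι : Type*} [Fintype ι]
    [DecidableEq ι] {G : Matrix ι ι ℝ} (hG : G.PosSemidef) (hdet : IsUnit G.det) (f y : ι → ℝ) :
    -(1 / 2) * (f ⬝ᵥ G⁻¹ *ᵥ f) ≤ (1 / 2) * (y ⬝ᵥ G *ᵥ y) - f ⬝ᵥ y := by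
  set x := G⁻¹ *ᵥ f
  have hGx : G *ᵥ x = f := by rw [mulVec_mulVec, mul_nonsing_inv _ hdet, one_mulVec]
  have hsymm : x ⬝ᵥ G *ᵥ y = y ⬝ᵥ G *ᵥ x := by
    rw [dotProduct_mulVec, ← mulVec_transpose, isHermitian_iff_isSymm.mp hG.isHermitian,
      dotProduct_comm]
  have hnonneg : 0 ≤ (y - x) ⬝ᵥ G *ᵥ (y - x) := by
    simpa using hG.dotProduct_mulVec_nonneg (y - x)
  have hexpand : (y - x) ⬝ᵥ G *ᵥ (y - x) = y ⬝ᵥ G *ᵥ y - 2 * (f ⬝ᵥ y) + f ⬝ᵥ x := by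
    rw [mulVec_sub, dotProduct_sub, sub_dotProduct, sub_dotProduct, hsymm, hGx,
      dotProduct_comm y f, dotProduct_comm x f]
    ring
  linarith

theorem Matrix.dotProduct_diagonal_mulVec {ι R : Type*} [Fintype ι] [DecidableEq ι]
    [CommSemiring R] (μ y : ι → R) : y ⬝ᵥ diagonal μ *ᵥ y = μ ⬝ᵥ (y * y) := by
  simp only [dotProduct, mulVec_diagonal, Pi.mul_apply]
  exact Finset.sum_congr rfl fun i _ => by ring

theorem stmt5_general
    (n m K : ℕ)
    (B : Matrix (Fin K) (Fin K) ℝ)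
    (h : Fin K → ℝ) (D : Matrix (Fin m) (Fin K) ℝ) (b : Fin m → ℝ)
    (H : Matrix (Fin n) (Fin K) ℝ)
    (G : (Fin K → ℝ) → Matrix (Fin K) (Fin K) ℝ)
    (hG : ∀ μ, G μ = B + (2 : ℝ) • Matrix.diagonal μ)
    (F : (Fin m → ℝ) → (Fin n → ℝ) → (Fin K → ℝ) → (Fin K → ℝ))
    (hF : ∀ σ τ μ, F σ τ μ = h - Dᵀ.mulVec σ - Hᵀ.mulVec τ + μ)
    (y : Fin K → ℝ)
    (hy1 : D.mulVec y ≤ b)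
    (hy2 : H.mulVec y = (1 : Fin n → ℝ))
    (hy3 : y * (y - (1 : Fin K → ℝ)) ≤ 0)
    (σ : Fin m → ℝ) (hσ : 0 ≤ σ)
    (τ : Fin n → ℝ)
    (μ : Fin K → ℝ) (hμ : 0 ≤ μ)
    (hpos : (G μ).PosDef) :
    -(1 / 2) * ((F σ τ μ) ⬝ᵥ (G μ)⁻¹.mulVec (F σ τ μ)) - σ ⬝ᵥ b - τ ⬝ᵥ (1 : Fin n → ℝ)
      ≤ (1 / 2) * (y ⬝ᵥ B.mulVec y) - h ⬝ᵥ y := by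
  have hdual := hpos.posSemidef.neg_half_dotProduct_nonsing_inv_mulVec_le
    ((isUnit_iff_isUnit_det _).mp hpos.isUnit) (F σ τ μ) y
  have hquad : y ⬝ᵥ G μ *ᵥ y = y ⬝ᵥ B *ᵥ y + 2 * (μ ⬝ᵥ (y * y)) := by
    rw [hG, add_mulVec, dotProduct_add, smul_mulVec, dotProduct_smul,
      dotProduct_diagonal_mulVec, smul_eq_mul]
  have hlin : F σ τ μ ⬝ᵥ y = h ⬝ᵥ y - σ ⬝ᵥ D *ᵥ y - τ ⬝ᵥ H *ᵥ y + μ ⬝ᵥ y := by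
    simp only [hF, add_dotProduct, sub_dotProduct, mulVec_transpose, dotProduct_mulVec]
  have hσy : σ ⬝ᵥ D *ᵥ y ≤ σ ⬝ᵥ b := dotProduct_le_dotProduct_of_nonneg_left hy1 hσ
  have hμy : μ ⬝ᵥ (y * y) ≤ μ ⬝ᵥ y :=
    dotProduct_le_dotProduct_of_nonneg_left (sub_nonpos.mp (by simpa [mul_sub] using hy3)) hμ
  rw [hy2] at hlin
  linarith

/-- Weak duality. For any primal feasible `y` and any dual feasible
`(σ,τ,μ)` with `G(μ)` positive definite, `P^d(σ,τ,μ) ≤ ½ yᵀBy − hᵀy`. -/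
theorem stmt5
    (n m K : ℕ) (hn : 0 < n) (hm : 0 < m) (hK : 0 < K)
    (B : Matrix (Fin K) (Fin K) ℝ) (hB : B.IsSymm)
    (h : Fin K → ℝ) (D : Matrix (Fin m) (Fin K) ℝ) (b : Fin m → ℝ)
    (H : Matrix (Fin n) (Fin K) ℝ)
    (G : (Fin K → ℝ) → Matrix (Fin K) (Fin K) ℝ)
    (hG : ∀ μ, G μ = B + (2 : ℝ) • Matrix.diagonal μ)
    (F : (Fin m → ℝ) → (Fin n → ℝ) → (Fin K → ℝ) → (Fin K → ℝ))
    (hF : ∀ σ τ μ, F σ τ μ = h - Dᵀ.mulVec σ - Hᵀ.mulVec τ + μ)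
    (y : Fin K → ℝ)
    (hy1 : D.mulVec y ≤ b)
    (hy2 : H.mulVec y = (1 : Fin n → ℝ))
    (hy3 : y * (y - (1 : Fin K → ℝ)) ≤ 0)
    (σ : Fin m → ℝ) (hσ : 0 ≤ σ)
    (τ : Fin n → ℝ)
    (μ : Fin K → ℝ) (hμ : 0 ≤ μ)
    (hpos : (G μ).PosDef) :
    -(1 / 2) * ((F σ τ μ) ⬝ᵥ (G μ)⁻¹.mulVec (F σ τ μ)) - σ ⬝ᵥ b - τ ⬝ᵥ (1 : Fin n → ℝ)
      ≤ (1 / 2) * (y ⬝ᵥ B.mulVec y) - h ⬝ᵥ y :=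
  stmt5_general n m K B h D b H G hG F hF y hy1 hy2 hy3 σ hσ τ μ hμ hpos
end

section
/- (Complementary-dual principle: equality of objective values.) Suppose σ̄ ∈ ℝ^m, τ̄ ∈ ℝⁿ, μ̄ ∈ ℝ^K satisfy σ̄ ≥ 0 and that G(μ̄) is invertible, and set ȳ = G(μ̄)⁻¹ F(σ̄,τ̄,μ̄). If Hȳ = e_n, ȳ ∘ (ȳ − e_K) = 0, and σ̄ᵀ(Dȳ − b) = 0, then ½ ȳᵀBȳ − hᵀȳ = P^d(σ̄,τ̄,μ̄). -/
open Matrix BigOperators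

/-! Since `G(μ̄) ȳ = F`, the dual quadratic term is `Fᵀ G(μ̄)⁻¹ F = Fᵀȳ = ȳᵀ G(μ̄) ȳ`, and
`ȳ ∘ ȳ = ȳ` turns this into `ȳᵀBȳ + 2 μ̄ᵀȳ`. Expanding `Fᵀȳ` instead and using `Hȳ = eₙ` and
complementary slackness gives `hᵀȳ − σ̄ᵀb − τ̄ᵀeₙ + μ̄ᵀȳ`. Equating the two expressions eliminates
`μ̄ᵀȳ`, which is exactly the claimed identity. -/

section

variable {ι κ ν R : Type*} [Fintype ι] [Fintype κ] [Fintype ν] [CommRing R]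

theorem dotProduct_diagonal_mulVec_of_mul_self_eq [DecidableEq ι] {y : ι → R}
    (hy : y * y = y) (μ : ι → R) : y ⬝ᵥ diagonal μ *ᵥ y = μ ⬝ᵥ y := by
  conv_rhs => rw [← hy]
  refine Finset.sum_congr rfl fun i _ => ?_
  simp only [mulVec_diagonal, Pi.mul_apply]
  ring

theorem dotProduct_add_two_smul_diagonal_mulVec_of_mul_self_eq [DecidableEq ι] {y : ι → R}
    (hy : y * y = y) (B : Matrix ι ι R) (μ : ι → R) :
    y ⬝ᵥ (B + (2 : R) • diagonal μ) *ᵥ y = y ⬝ᵥ B *ᵥ y + 2 * (μ ⬝ᵥ y) := by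
  rw [add_mulVec, smul_mulVec, dotProduct_add, dotProduct_smul, smul_eq_mul,
    dotProduct_diagonal_mulVec_of_mul_self_eq hy]

theorem sub_transpose_mulVec_sub_transpose_mulVec_add_dotProduct (h μ y : ι → R)
    (D : Matrix κ ι R) (σ : κ → R) (H : Matrix ν ι R) (τ : ν → R) :
    (h - Dᵀ *ᵥ σ - Hᵀ *ᵥ τ + μ) ⬝ᵥ y = h ⬝ᵥ y - σ ⬝ᵥ D *ᵥ y - τ ⬝ᵥ H *ᵥ y + μ ⬝ᵥ y := by
  simp only [add_dotProduct, sub_dotProduct, mulVec_transpose, dotProduct_mulVec]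

end

theorem stmt6_general
    (n m K : ℕ)
    (B : Matrix (Fin K) (Fin K) ℝ)
    (h : Fin K → ℝ) (D : Matrix (Fin m) (Fin K) ℝ) (b : Fin m → ℝ)
    (H : Matrix (Fin n) (Fin K) ℝ)
    (G : (Fin K → ℝ) → Matrix (Fin K) (Fin K) ℝ)
    (hG : ∀ μ, G μ = B + (2 : ℝ) • Matrix.diagonal μ)
    (F : (Fin m → ℝ) → (Fin n → ℝ) → (Fin K → ℝ) → (Fin K → ℝ))
    (hF : ∀ σ τ μ, F σ τ μ = h - Dᵀ.mulVec σ - Hᵀ.mulVec τ + μ)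
    (σbar : Fin m → ℝ) (τbar : Fin n → ℝ) (μbar : Fin K → ℝ)
    (hinv : IsUnit (G μbar).det)
    (ybar : Fin K → ℝ)
    (hybar : ybar = (G μbar)⁻¹.mulVec (F σbar τbar μbar))
    (hfeas2 : H.mulVec ybar = (1 : Fin n → ℝ))
    (hfeas3 : ybar * (ybar - (1 : Fin K → ℝ)) = 0)
    (hslack : σbar ⬝ᵥ (D.mulVec ybar - b) = 0) :
    (1 / 2) * (ybar ⬝ᵥ B.mulVec ybar) - h ⬝ᵥ ybar
      = -(1 / 2) * ((F σbar τbar μbar) ⬝ᵥ (G μbar)⁻¹.mulVec (F σbar τbar μbar))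
        - σbar ⬝ᵥ b - τbar ⬝ᵥ (1 : Fin n → ℝ) := by
  have hGy : G μbar *ᵥ ybar = F σbar τbar μbar := by
    rw [hybar, mulVec_mulVec, mul_nonsing_inv _ hinv, one_mulVec]
  have hidem : ybar * ybar = ybar := by
    rwa [mul_sub, mul_one, sub_eq_zero] at hfeas3
  have hσDy : σbar ⬝ᵥ D *ᵥ ybar = σbar ⬝ᵥ b := by
    rwa [dotProduct_sub, sub_eq_zero] at hslack
  have hquad : F σbar τbar μbar ⬝ᵥ ybar = ybar ⬝ᵥ B *ᵥ ybar + 2 * (μbar ⬝ᵥ ybar) := by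
    rw [← hGy, dotProduct_comm, hG, dotProduct_add_two_smul_diagonal_mulVec_of_mul_self_eq hidem]
  have hlin : F σbar τbar μbar ⬝ᵥ ybar
      = h ⬝ᵥ ybar - σbar ⬝ᵥ b - τbar ⬝ᵥ (1 : Fin n → ℝ) + μbar ⬝ᵥ ybar := by
    rw [hF, sub_transpose_mulVec_sub_transpose_mulVec_add_dotProduct, hσDy, hfeas2]
  rw [← hybar]
  linarith

/-- Complementary-dual principle (equality of objective values).
If `ȳ = G(μ̄)⁻¹F(σ̄,τ̄,μ̄)` satisfies `Hȳ = eₙ`, `ȳ ∘ (ȳ − e_K) = 0` and the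
complementary slackness condition `σ̄ᵀ(Dȳ − b) = 0`, then
`½ ȳᵀBȳ − hᵀȳ = P^d(σ̄,τ̄,μ̄)`. -/
theorem stmt6
    (n m K : ℕ) (hn : 0 < n) (hm : 0 < m) (hK : 0 < K)
    (B : Matrix (Fin K) (Fin K) ℝ) (hB : B.IsSymm)
    (h : Fin K → ℝ) (D : Matrix (Fin m) (Fin K) ℝ) (b : Fin m → ℝ)
    (H : Matrix (Fin n) (Fin K) ℝ)
    (G : (Fin K → ℝ) → Matrix (Fin K) (Fin K) ℝ)
    (hG : ∀ μ, G μ = B + (2 : ℝ) • Matrix.diagonal μ)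
    (F : (Fin m → ℝ) → (Fin n → ℝ) → (Fin K → ℝ) → (Fin K → ℝ))
    (hF : ∀ σ τ μ, F σ τ μ = h - Dᵀ.mulVec σ - Hᵀ.mulVec τ + μ)
    (σbar : Fin m → ℝ) (τbar : Fin n → ℝ) (μbar : Fin K → ℝ)
    (hσ : 0 ≤ σbar)
    (hinv : IsUnit (G μbar).det)
    (ybar : Fin K → ℝ)
    (hybar : ybar = (G μbar)⁻¹.mulVec (F σbar τbar μbar))
    (hfeas2 : H.mulVec ybar = (1 : Fin n → ℝ))
    (hfeas3 : ybar * (ybar - (1 : Fin K → ℝ)) = 0)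
    (hslack : σbar ⬝ᵥ (D.mulVec ybar - b) = 0) :
    (1 / 2) * (ybar ⬝ᵥ B.mulVec ybar) - h ⬝ᵥ ybar
      = -(1 / 2) * ((F σbar τbar μbar) ⬝ᵥ (G μbar)⁻¹.mulVec (F σbar τbar μbar))
        - σbar ⬝ᵥ b - τbar ⬝ᵥ (1 : Fin n → ℝ) :=
  stmt6_general n m K B h D b H G hG F hF σbar τbar μbar hinv ybar hybar hfeas2 hfeas3 hslack
end

section
/- (Global optimality.) Suppose σ̄ ∈ ℝ^m, τ̄ ∈ ℝⁿ, μ̄ ∈ ℝ^K satisfy σ̄ ≥ 0, μ̄ ≥ 0, and G(μ̄) is positive definite, and set ȳ = G(μ̄)⁻¹ F(σ̄,τ̄,μ̄). If Dȳ ≤ b, Hȳ = e_n, ȳ ∘ (ȳ − e_K) ≤ 0, σ̄ᵀ(Dȳ − b) = 0, and μ̄ᵀ(ȳ ∘ (ȳ − e_K)) = 0, then ȳ is a global minimizer of P(y) = ½ yᵀBy − hᵀy over the feasible set Y = {y ∈ ℝ^K : Dy ≤ b, Hy = e_n, y ∘ (y − e_K) ≤ 0}, and P(ȳ) = P^d(σ̄,τ̄,μ̄).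 -/
/-!
Weak duality for the Lagrangian
`L(y) = P(y) + σ̄ᵀ(Dy − b) + τ̄ᵀ(Hy − e_n) + μ̄ᵀ(y ∘ (y − e_K))`.
Expanding, `L(y) = ½ yᵀG(μ̄)y − F(σ̄,τ̄,μ̄)ᵀy − σ̄ᵀb − τ̄ᵀe_n`, a convex quadratic whose minimiser is
`ȳ = G(μ̄)⁻¹F` with value `P^d(σ̄,τ̄,μ̄)`. On the feasible set the multiplier terms are `≤ 0`, so
`P ≥ L ≥ P^d`, while complementary slackness gives `P(ȳ) = L(ȳ) = P^d`.
-/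

open Matrix

variable {ι κ ν : Type*} [Fintype ι] [Fintype κ] [Fintype ν]

lemma dotProduct_nonpos_of_nonneg_of_nonpos {w u : ι → ℝ} (hw : 0 ≤ w) (hu : u ≤ 0) :
    w ⬝ᵥ u ≤ 0 :=
  dotProduct_zero w ▸ dotProduct_le_dotProduct_of_nonneg_left hu hw

lemma Matrix.IsHermitian.dotProduct_mulVec_comm {A : Matrix ι ι ℝ} (hA : A.IsHermitian)
    (u v : ι → ℝ) : u ⬝ᵥ A *ᵥ v = v ⬝ᵥ A *ᵥ u := by
  rw [dotProduct_mulVec, ← mulVec_transpose, ← conjTranspose_eq_transpose_of_trivial, hA,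
    dotProduct_comm]

lemma quadratic_eq_of_mulVec_eq {A : Matrix ι ι ℝ} (hA : A.IsHermitian) {x f : ι → ℝ}
    (hx : A *ᵥ x = f) (y : ι → ℝ) :
    (1 / 2) * (y ⬝ᵥ A *ᵥ y) - f ⬝ᵥ y
      = (1 / 2) * ((y - x) ⬝ᵥ A *ᵥ (y - x)) - (1 / 2) * (f ⬝ᵥ x) := by
  subst hx
  simp only [mulVec_sub, dotProduct_sub, sub_dotProduct, hA.dotProduct_mulVec_comm y x,
    dotProduct_comm (A *ᵥ x)]
  ring

lemma quadratic_le_of_mulVec_eq {A : Matrix ι ι ℝ} (hA : A.PosSemidef) {x f : ι → ℝ}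
    (hx : A *ᵥ x = f) (y : ι → ℝ) :
    -(1 / 2) * (f ⬝ᵥ x) ≤ (1 / 2) * (y ⬝ᵥ A *ᵥ y) - f ⬝ᵥ y := by
  rw [quadratic_eq_of_mulVec_eq hA.isHermitian hx]
  have := hA.dotProduct_mulVec_nonneg (y - x)
  simp only [star_trivial] at this
  linarith

lemma dotProduct_mul_sub_one [DecidableEq ι] (μ y : ι → ℝ) :
    μ ⬝ᵥ (y * (y - 1)) = y ⬝ᵥ diagonal μ *ᵥ y - μ ⬝ᵥ y := by
  simp only [dotProduct, mulVec_diagonal, ← Finset.sum_sub_distrib, Pi.mul_apply,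
    Pi.sub_apply, Pi.one_apply]
  exact Finset.sum_congr rfl fun i _ => by ring

lemma lagrangian_eq [DecidableEq ι] (B : Matrix ι ι ℝ) (h : ι → ℝ) (D : Matrix κ ι ℝ)
    (b : κ → ℝ) (H : Matrix ν ι ℝ) (c : ν → ℝ) (σ : κ → ℝ) (τ : ν → ℝ)
    (μ y : ι → ℝ) :
    (1 / 2) * (y ⬝ᵥ B *ᵥ y) - h ⬝ᵥ y + σ ⬝ᵥ (D *ᵥ y - b) + τ ⬝ᵥ (H *ᵥ y - c)
        + μ ⬝ᵥ (y * (y - 1))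
      = (1 / 2) * (y ⬝ᵥ (B + (2 : ℝ) • diagonal μ) *ᵥ y) - (h - Dᵀ *ᵥ σ - Hᵀ *ᵥ τ + μ) ⬝ᵥ y
        - σ ⬝ᵥ b - τ ⬝ᵥ c := by
  simp only [dotProduct_mul_sub_one, add_mulVec, smul_mulVec, dotProduct_add, dotProduct_smul,
    smul_eq_mul, dotProduct_sub, sub_dotProduct, add_dotProduct, dotProduct_mulVec,
    mulVec_transpose]
  ring

theorem stmt7_general
    (n m K : ℕ)
    (B : Matrix (Fin K) (Fin K) ℝ)
    (h : Fin K → ℝ) (D : Matrix (Fin m) (Fin K) ℝ) (b : Fin m → ℝ)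
    (H : Matrix (Fin n) (Fin K) ℝ)
    (G : (Fin K → ℝ) → Matrix (Fin K) (Fin K) ℝ)
    (hG : ∀ μ, G μ = B + (2 : ℝ) • Matrix.diagonal μ)
    (F : (Fin m → ℝ) → (Fin n → ℝ) → (Fin K → ℝ) → (Fin K → ℝ))
    (hF : ∀ σ τ μ, F σ τ μ = h - Dᵀ.mulVec σ - Hᵀ.mulVec τ + μ)
    (P : (Fin K → ℝ) → ℝ)
    (hP : ∀ y, P y = (1 / 2) * (y ⬝ᵥ B.mulVec y) - h ⬝ᵥ y)
    (Y : Set (Fin K → ℝ))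
    (hY : Y = {y | D.mulVec y ≤ b ∧ H.mulVec y = (1 : Fin n → ℝ)
        ∧ y * (y - (1 : Fin K → ℝ)) ≤ 0})
    (σbar : Fin m → ℝ) (τbar : Fin n → ℝ) (μbar : Fin K → ℝ)
    (hσ : 0 ≤ σbar) (hμ : 0 ≤ μbar)
    (hpos : (G μbar).PosDef)
    (ybar : Fin K → ℝ)
    (hybar : ybar = (G μbar)⁻¹.mulVec (F σbar τbar μbar))
    (hfeas1 : D.mulVec ybar ≤ b)
    (hfeas2 : H.mulVec ybar = (1 : Fin n → ℝ))
    (hfeas3 : ybar * (ybar - (1 : Fin K → ℝ)) ≤ 0)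
    (hslack1 : σbar ⬝ᵥ (D.mulVec ybar - b) = 0)
    (hslack2 : μbar ⬝ᵥ (ybar * (ybar - (1 : Fin K → ℝ))) = 0) :
    ybar ∈ Y
    ∧ (∀ y ∈ Y, P ybar ≤ P y)
    ∧ P ybar = -(1 / 2) * ((F σbar τbar μbar) ⬝ᵥ (G μbar)⁻¹.mulVec (F σbar τbar μbar))
        - σbar ⬝ᵥ b - τbar ⬝ᵥ (1 : Fin n → ℝ) := by
  set f := F σbar τbar μbar with hf
  have hGy : G μbar *ᵥ ybar = f := by
    rw [hybar, mulVec_mulVec, mul_nonsing_inv _ ((isUnit_iff_isUnit_det _).1 hpos.isUnit),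
      one_mulVec]
  have hLag : ∀ y, P y + σbar ⬝ᵥ (D *ᵥ y - b) + τbar ⬝ᵥ (H *ᵥ y - 1) + μbar ⬝ᵥ (y * (y - 1))
      = (1 / 2) * (y ⬝ᵥ G μbar *ᵥ y) - f ⬝ᵥ y - σbar ⬝ᵥ b - τbar ⬝ᵥ 1 := fun y => by
    rw [hP, hG, hf, hF]; exact lagrangian_eq B h D b H 1 σbar τbar μbar y
  have hPbar : P ybar = -(1 / 2) * (f ⬝ᵥ ybar) - σbar ⬝ᵥ b - τbar ⬝ᵥ 1 := by
    have hval := quadratic_eq_of_mulVec_eq hpos.isHermitian hGy ybar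
    have hL := hLag ybar
    rw [sub_self, mulVec_zero, dotProduct_zero] at hval
    rw [hslack1, hslack2, hfeas2, sub_self, dotProduct_zero] at hL
    linarith
  refine ⟨hY ▸ ⟨hfeas1, hfeas2, hfeas3⟩, fun y hy => ?_, by rw [hPbar, hybar]⟩
  obtain ⟨hy1, hy2, hy3⟩ := hY ▸ hy
  have hσy := dotProduct_nonpos_of_nonneg_of_nonpos hσ (sub_nonpos.2 hy1)
  have hμy := dotProduct_nonpos_of_nonneg_of_nonpos hμ hy3
  have hmin := quadratic_le_of_mulVec_eq hpos.posSemidef hGy y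
  have hL := hLag y
  rw [hy2, sub_self, dotProduct_zero] at hL
  linarith

/-- Global optimality. Under the KKT-type conditions, the point
`ȳ = G(μ̄)⁻¹F(σ̄,τ̄,μ̄)` is a global minimizer of `P(y) = ½ yᵀBy − hᵀy` over the
feasible set `Y`, and `P(ȳ) = P^d(σ̄,τ̄,μ̄)`. -/
theorem stmt7
    (n m K : ℕ) (hn : 0 < n) (hm : 0 < m) (hK : 0 < K)
    (B : Matrix (Fin K) (Fin K) ℝ) (hB : B.IsSymm)
    (h : Fin K → ℝ) (D : Matrix (Fin m) (Fin K) ℝ) (b : Fin m → ℝ)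
    (H : Matrix (Fin n) (Fin K) ℝ)
    (G : (Fin K → ℝ) → Matrix (Fin K) (Fin K) ℝ)
    (hG : ∀ μ, G μ = B + (2 : ℝ) • Matrix.diagonal μ)
    (F : (Fin m → ℝ) → (Fin n → ℝ) → (Fin K → ℝ) → (Fin K → ℝ))
    (hF : ∀ σ τ μ, F σ τ μ = h - Dᵀ.mulVec σ - Hᵀ.mulVec τ + μ)
    (P : (Fin K → ℝ) → ℝ)
    (hP : ∀ y, P y = (1 / 2) * (y ⬝ᵥ B.mulVec y) - h ⬝ᵥ y)
    (Y : Set (Fin K → ℝ))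
    (hY : Y = {y | D.mulVec y ≤ b ∧ H.mulVec y = (1 : Fin n → ℝ)
        ∧ y * (y - (1 : Fin K → ℝ)) ≤ 0})
    (σbar : Fin m → ℝ) (τbar : Fin n → ℝ) (μbar : Fin K → ℝ)
    (hσ : 0 ≤ σbar) (hμ : 0 ≤ μbar)
    (hpos : (G μbar).PosDef)
    (ybar : Fin K → ℝ)
    (hybar : ybar = (G μbar)⁻¹.mulVec (F σbar τbar μbar))
    (hfeas1 : D.mulVec ybar ≤ b)
    (hfeas2 : H.mulVec ybar = (1 : Fin n → ℝ))
    (hfeas3 : ybar * (ybar - (1 : Fin K → ℝ)) ≤ 0)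
    (hslack1 : σbar ⬝ᵥ (D.mulVec ybar - b) = 0)
    (hslack2 : μbar ⬝ᵥ (ybar * (ybar - (1 : Fin K → ℝ))) = 0) :
    ybar ∈ Y
    ∧ (∀ y ∈ Y, P ybar ≤ P y)
    ∧ P ybar = -(1 / 2) * ((F σbar τbar μbar) ⬝ᵥ (G μbar)⁻¹.mulVec (F σbar τbar μbar))
        - σbar ⬝ᵥ b - τbar ⬝ᵥ (1 : Fin n → ℝ) :=
  stmt7_general n m K B h D b H G hG F hF P hP Y hY σbar τbar μbar hσ hμ hpos ybar hybar hfeas1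
    hfeas2 hfeas3 hslack1 hslack2
end

section
/- (Concavity of the canonical dual function.) The function P^d(σ,τ,μ) = −½ F(σ,τ,μ)ᵀ G(μ)⁻¹ F(σ,τ,μ) − σᵀb − τᵀe_n is concave on the convex set {(σ,τ,μ) ∈ ℝ^m × ℝⁿ × ℝ^K : G(μ) is positive definite}. -/
/-!
For positive definite `A`, `xᵀA⁻¹x = max_y (2 yᵀx - yᵀAy)` (attained at `y = A⁻¹x`), a pointwise
maximum of functions that are linear in the pair `(x, A)`; hence `(x, A) ↦ xᵀA⁻¹x` is jointly
convex on the positive definite cone. Since `(F, G)` depends affinely on `(σ, τ, μ)`, the dual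
function is `-½` times this convex function of an affine map, minus a linear one.
-/

open Matrix

namespace Matrix

variable {ι : Type*}

lemma convex_setOf_posDef [Fintype ι] : Convex ℝ {A : Matrix ι ι ℝ | A.PosDef} :=
  convex_iff_forall_pos.2 fun _ hA _ hB _ _ ha hb _ => (hA.smul ha).add (hB.smul hb)

variable [Fintype ι] [DecidableEq ι]

lemma PosDef.isGreatest_dotProduct_inv_mulVec {A : Matrix ι ι ℝ} (hA : A.PosDef) (x : ι → ℝ) :
    IsGreatest (Set.range fun y => 2 * (y ⬝ᵥ x) - y ⬝ᵥ A *ᵥ y) (x ⬝ᵥ A⁻¹ *ᵥ x) := by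
  set u := A⁻¹ *ᵥ x
  have hAu : A *ᵥ u = x := by
    rw [mulVec_mulVec, mul_nonsing_inv A ((isUnit_iff_isUnit_det A).1 hA.isUnit), one_mulVec]
  refine ⟨⟨u, by simp only [hAu, dotProduct_comm u x]; ring⟩, Set.forall_mem_range.2 fun y => ?_⟩
  have hsymm : u ⬝ᵥ A *ᵥ y = y ⬝ᵥ x := by
    rw [dotProduct_mulVec, ← mulVec_transpose, (isHermitian_iff_isSymm.1 hA.isHermitian).eq,
      hAu, dotProduct_comm]
  have hsq := hA.posSemidef.dotProduct_mulVec_nonneg (u - y)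
  simp only [star_trivial, mulVec_sub, sub_dotProduct, dotProduct_sub, hAu, hsymm] at hsq
  rw [dotProduct_comm u x] at hsq
  linarith

theorem convexOn_dotProduct_inv_mulVec :
    ConvexOn ℝ {p : (ι → ℝ) × Matrix ι ι ℝ | p.2.PosDef} fun p => p.1 ⬝ᵥ p.2⁻¹ *ᵥ p.1 := by
  refine convexOn_iff_forall_pos.2
    ⟨convex_setOf_posDef.linear_preimage (LinearMap.snd ℝ _ _), ?_⟩
  rintro ⟨x₁, A₁⟩ (hA₁ : A₁.PosDef) ⟨x₂, A₂⟩ (hA₂ : A₂.PosDef) a b ha hb hab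
  have hA : (a • A₁ + b • A₂).PosDef := convex_setOf_posDef hA₁ hA₂ ha.le hb.le hab
  obtain ⟨y, hy⟩ := (hA.isGreatest_dotProduct_inv_mulVec (a • x₁ + b • x₂)).1
  have h₁ := (hA₁.isGreatest_dotProduct_inv_mulVec x₁).2 ⟨y, rfl⟩
  have h₂ := (hA₂.isGreatest_dotProduct_inv_mulVec x₂).2 ⟨y, rfl⟩
  dsimp only at hy h₁ h₂ ⊢
  calc (a • x₁ + b • x₂) ⬝ᵥ (a • A₁ + b • A₂)⁻¹ *ᵥ (a • x₁ + b • x₂)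
      = a * (2 * (y ⬝ᵥ x₁) - y ⬝ᵥ A₁ *ᵥ y) + b * (2 * (y ⬝ᵥ x₂) - y ⬝ᵥ A₂ *ᵥ y) := by
        rw [← hy]
        simp only [dotProduct_add, dotProduct_smul, add_mulVec, smul_mulVec, smul_eq_mul]
        ring
    _ ≤ a * (x₁ ⬝ᵥ A₁⁻¹ *ᵥ x₁) + b * (x₂ ⬝ᵥ A₂⁻¹ *ᵥ x₂) := by gcongr

theorem concaveOn_neg_half_dotProduct_inv_mulVec_sub {E : Type*} [AddCommGroup E] [Module ℝ E]
    (g : E →ᵃ[ℝ] (ι → ℝ) × Matrix ι ι ℝ) (ℓ : E →ₗ[ℝ] ℝ) :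
    ConcaveOn ℝ {p | (g p).2.PosDef}
      fun p => -(1 / 2) * ((g p).1 ⬝ᵥ (g p).2⁻¹ *ᵥ (g p).1) - ℓ p := by
  have hΦ := convexOn_dotProduct_inv_mulVec.comp_affineMap g
  refine ((hΦ.smul (c := 1 / 2) (by norm_num)).neg.sub (ℓ.convexOn hΦ.1)).congr fun p _ => ?_
  simp only [Pi.sub_apply, Pi.neg_apply, Function.comp_apply, smul_eq_mul]
  ring

end Matrix

theorem stmt10_general
    (n m K : ℕ)
    (B : Matrix (Fin K) (Fin K) ℝ)
    (h : Fin K → ℝ) (D : Matrix (Fin m) (Fin K) ℝ) (b : Fin m → ℝ)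
    (H : Matrix (Fin n) (Fin K) ℝ)
    (G : (Fin K → ℝ) → Matrix (Fin K) (Fin K) ℝ)
    (hG : ∀ μ, G μ = B + (2 : ℝ) • Matrix.diagonal μ)
    (F : (Fin m → ℝ) → (Fin n → ℝ) → (Fin K → ℝ) → (Fin K → ℝ))
    (hF : ∀ σ τ μ, F σ τ μ = h - Dᵀ.mulVec σ - Hᵀ.mulVec τ + μ) :
    ConcaveOn ℝ
      {p : (Fin m → ℝ) × (Fin n → ℝ) × (Fin K → ℝ) | (G p.2.2).PosDef}
      (fun p => -(1 / 2) * ((F p.1 p.2.1 p.2.2) ⬝ᵥ (G p.2.2)⁻¹.mulVec (F p.1 p.2.1 p.2.2))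
        - p.1 ⬝ᵥ b - p.2.1 ⬝ᵥ (1 : Fin n → ℝ)) := by
  let L : (Fin m → ℝ) × (Fin n → ℝ) × (Fin K → ℝ) →ₗ[ℝ] (Fin K → ℝ) × Matrix (Fin K) (Fin K) ℝ :=
    { toFun := fun p => (p.2.2 - Dᵀ *ᵥ p.1 - Hᵀ *ᵥ p.2.1, (2 : ℝ) • diagonal p.2.2)
      map_add' := fun p q => Prod.ext
        (by simp only [Prod.fst_add, Prod.snd_add, mulVec_add]; abel)
        (by simp only [Prod.snd_add, ← smul_add, diagonal_add]; rfl)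
      map_smul' := fun c p => Prod.ext
        (by simp only [Prod.smul_fst, Prod.smul_snd, mulVec_smul, smul_sub]; rfl)
        (by simp only [Prod.smul_snd, diagonal_smul, RingHom.id_apply]; exact smul_comm _ _ _) }
  let ℓ : (Fin m → ℝ) × (Fin n → ℝ) × (Fin K → ℝ) →ₗ[ℝ] ℝ :=
    { toFun := fun p => p.1 ⬝ᵥ b + p.2.1 ⬝ᵥ 1
      map_add' := fun p q => by simp only [Prod.fst_add, Prod.snd_add, add_dotProduct]; ring
      map_smul' := fun c p => by simp [smul_dotProduct, mul_add] }
  let g := L.toAffineMap + AffineMap.const ℝ _ (h, B)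
  have hg : ∀ p, g p = (F p.1 p.2.1 p.2.2, G p.2.2) := fun p => by
    simp only [g, L, hF, hG, AffineMap.coe_add, LinearMap.coe_toAffineMap, LinearMap.coe_mk,
      AddHom.coe_mk, AffineMap.coe_const, Pi.add_apply, Function.const_apply, Prod.mk_add_mk]
    congr 1 <;> abel
  have hs : {p : (Fin m → ℝ) × (Fin n → ℝ) × (Fin K → ℝ) | (G p.2.2).PosDef}
      = {p | (g p).2.PosDef} := by simp only [hg]
  rw [hs]
  refine (concaveOn_neg_half_dotProduct_inv_mulVec_sub g ℓ).congr fun p _ => ?_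
  simp only [hg, ℓ, LinearMap.coe_mk, AddHom.coe_mk]
  ring

/-- Concavity of the canonical dual function
`P^d(σ,τ,μ) = −½ F(σ,τ,μ)ᵀ G(μ)⁻¹ F(σ,τ,μ) − σᵀb − τᵀeₙ` on the convex set
`{(σ,τ,μ) : G(μ) ≻ 0}`. -/
theorem stmt10
    (n m K : ℕ) (hn : 0 < n) (hm : 0 < m) (hK : 0 < K)
    (B : Matrix (Fin K) (Fin K) ℝ) (hB : B.IsSymm)
    (h : Fin K → ℝ) (D : Matrix (Fin m) (Fin K) ℝ) (b : Fin m → ℝ)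
    (H : Matrix (Fin n) (Fin K) ℝ)
    (G : (Fin K → ℝ) → Matrix (Fin K) (Fin K) ℝ)
    (hG : ∀ μ, G μ = B + (2 : ℝ) • Matrix.diagonal μ)
    (F : (Fin m → ℝ) → (Fin n → ℝ) → (Fin K → ℝ) → (Fin K → ℝ))
    (hF : ∀ σ τ μ, F σ τ μ = h - Dᵀ.mulVec σ - Hᵀ.mulVec τ + μ) :
    ConcaveOn ℝ
      {p : (Fin m → ℝ) × (Fin n → ℝ) × (Fin K → ℝ) | (G p.2.2).PosDef}
      (fun p => -(1 / 2) * ((F p.1 p.2.1 p.2.2) ⬝ᵥ (G p.2.2)⁻¹.mulVec (F p.1 p.2.1 p.2.2))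
        - p.1 ⬝ᵥ b - p.2.1 ⬝ᵥ (1 : Fin n → ℝ)) :=
  stmt10_general n m K B h D b H G hG F hF
end

section
/- (Canonical duality for the quadratic perturbation example: global minimizer.) Let α > 0, λ > 0, f ∈ ℝⁿ, and define Π(x) = ½ α (½‖x‖² − λ)² − fᵀx for x ∈ ℝⁿ. If σ > 0 satisfies (α⁻¹σ + λ)σ² = ½‖f‖², then x̄ = σ⁻¹ f is a global minimizer of Π over ℝⁿ. -/
/-!
Canonical duality: with `ε = ½‖x‖² − λ`, the Fenchel–Young inequality `½αε² ≥ σε − σ²/(2α)`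
together with `⟪f, x⟫ − ½σ‖x‖² ≤ ‖f‖²/(2σ)` bounds `Π` below by the dual function
`Πᵈ(σ) = −‖f‖²/(2σ) − σ²/(2α) − λσ` for every `σ > 0`. The dual equation
`(α⁻¹σ + λ)σ² = ½‖f‖²` says exactly that both inequalities are equalities at `x̄ = σ⁻¹f`,
so `Π(x̄) = Πᵈ(σ) ≤ Π(x)`.
-/

open scoped RealInnerProductSpace

namespace DoubleWell

variable {E : Type*} [NormedAddCommGroup E] [InnerProductSpace ℝ E]

noncomputable def energy (α lam : ℝ) (f x : E) : ℝ :=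
  (1 / 2) * α * ((1 / 2) * ‖x‖ ^ 2 - lam) ^ 2 - ⟪f, x⟫

noncomputable def dual (α lam : ℝ) (f : E) (σ : ℝ) : ℝ :=
  -(‖f‖ ^ 2 / (2 * σ)) - σ ^ 2 / (2 * α) - lam * σ

lemma mul_sub_sq_div_le {α : ℝ} (hα : 0 < α) (σ ε : ℝ) :
    σ * ε - σ ^ 2 / (2 * α) ≤ (1 / 2) * α * ε ^ 2 := by
  have key : σ * ε - σ ^ 2 / (2 * α) = (1 / 2) * α * ε ^ 2 - (α * ε - σ) ^ 2 / (2 * α) := by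
    field_simp
    ring
  rw [key]
  linarith [div_nonneg (sq_nonneg (α * ε - σ)) (by positivity : (0 : ℝ) ≤ 2 * α)]

lemma inner_sub_le_norm_sq_div {σ : ℝ} (hσ : 0 < σ) (f x : E) :
    ⟪f, x⟫ - σ / 2 * ‖x‖ ^ 2 ≤ ‖f‖ ^ 2 / (2 * σ) := by
  have := mul_sub_sq_div_le hσ ‖f‖ ‖x‖
  linarith [real_inner_le_norm f x]

theorem dual_le_energy {α : ℝ} (hα : 0 < α) (lam : ℝ) {σ : ℝ} (hσ : 0 < σ) (f x : E) :
    dual α lam f σ ≤ energy α lam f x := by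
  have fenchelYoung := mul_sub_sq_div_le hα σ ((1 / 2) * ‖x‖ ^ 2 - lam)
  have completeSquare := inner_sub_le_norm_sq_div hσ f x
  unfold dual energy
  linarith

theorem energy_inv_smul_eq_dual {α lam σ : ℝ} (hα : 0 < α) (hσ : 0 < σ) (f : E)
    (heq : (α⁻¹ * σ + lam) * σ ^ 2 = (1 / 2) * ‖f‖ ^ 2) :
    energy α lam f (σ⁻¹ • f) = dual α lam f σ := by
  have hf : ‖f‖ ^ 2 = 2 * ((α⁻¹ * σ + lam) * σ ^ 2) := by linarith
  have hε : (1 / 2) * ‖σ⁻¹ • f‖ ^ 2 - lam = σ / α := by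
    rw [norm_smul, Real.norm_of_nonneg (inv_nonneg.mpr hσ.le), mul_pow, hf]
    field_simp
    ring
  rw [energy, dual, hε, real_inner_smul_right, real_inner_self_eq_norm_sq, hf]
  field_simp
  ring

end DoubleWell

theorem stmt12_general
    (n : ℕ) (α lam : ℝ) (hα : 0 < α)
    (f : EuclideanSpace ℝ (Fin n))
    (Pi : EuclideanSpace ℝ (Fin n) → ℝ)
    (hPi : ∀ x, Pi x = (1 / 2) * α * ((1 / 2) * ‖x‖ ^ 2 - lam) ^ 2 - ⟪f, x⟫)
    (σ : ℝ) (hσ : 0 < σ)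
    (heq : (α⁻¹ * σ + lam) * σ ^ 2 = (1 / 2) * ‖f‖ ^ 2) :
    ∀ x : EuclideanSpace ℝ (Fin n), Pi (σ⁻¹ • f) ≤ Pi x := by
  obtain rfl : Pi = DoubleWell.energy α lam f := funext hPi
  intro x
  rw [DoubleWell.energy_inv_smul_eq_dual hα hσ f heq]
  exact DoubleWell.dual_le_energy hα lam hσ f x

/-- For the nonconvex example `Π(x) = ½α(½‖x‖² − λ)² − fᵀx`, if `σ > 0`
solves the dual algebraic equation `(α⁻¹σ + λ)σ² = ½‖f‖²`, then `x̄ = σ⁻¹f` is a global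
minimizer of `Π` over `ℝⁿ`. -/
theorem stmt12
    (n : ℕ) (α lam : ℝ) (hα : 0 < α) (hlam : 0 < lam)
    (f : EuclideanSpace ℝ (Fin n))
    (Pi : EuclideanSpace ℝ (Fin n) → ℝ)
    (hPi : ∀ x, Pi x = (1 / 2) * α * ((1 / 2) * ‖x‖ ^ 2 - lam) ^ 2 - ⟪f, x⟫)
    (σ : ℝ) (hσ : 0 < σ)
    (heq : (α⁻¹ * σ + lam) * σ ^ 2 = (1 / 2) * ‖f‖ ^ 2) :
    ∀ x : EuclideanSpace ℝ (Fin n), Pi (σ⁻¹ • f) ≤ Pi x :=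
  stmt12_general n α lam hα f Pi hPi σ hσ heq
end

section
/- (Complementary-dual equality for the example.) Let α > 0, λ > 0, f ∈ ℝⁿ, Π(x) = ½ α (½‖x‖² − λ)² − fᵀx, and Π^d(σ) = −‖f‖²/(2σ) − σ²/(2α) − λσ for σ ≠ 0. If σ ≠ 0 satisfies the dual algebraic equation (α⁻¹σ + λ)σ² = ½‖f‖², then Π(σ⁻¹ f) = Π^d(σ). -/
/-!
The dual algebraic equation says exactly that the strain `½‖σ⁻¹f‖² − λ` at `σ⁻¹f` equals
`σ/α`. Substituting this into the quadratic term of `Π` and `‖f‖² = 2(σ/α + λ)σ²` into the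
linear term reduces both `Π(σ⁻¹f)` and `Π^d(σ)` to `−3σ²/(2α) − 2λσ`.
-/

open scoped RealInnerProductSpace

section InnerProductSpace

variable {E : Type*} [NormedAddCommGroup E] [InnerProductSpace ℝ E]

lemma norm_inv_smul_sq (σ : ℝ) (f : E) : ‖σ⁻¹ • f‖ ^ 2 = ‖f‖ ^ 2 / σ ^ 2 := by
  rw [norm_smul, mul_pow, norm_inv, Real.norm_eq_abs, inv_pow, sq_abs, inv_mul_eq_div]

lemma inner_inv_smul_self (σ : ℝ) (f : E) : ⟪f, σ⁻¹ • f⟫ = ‖f‖ ^ 2 / σ := by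
  rw [real_inner_smul_right, real_inner_self_eq_norm_sq, inv_mul_eq_div]

end InnerProductSpace

section DualAlgebraicEquation

variable {α lam σ N : ℝ}

lemma half_div_sq_sub_eq_of_dual_eq (hσ : σ ≠ 0)
    (heq : (α⁻¹ * σ + lam) * σ ^ 2 = 1 / 2 * N) :
    1 / 2 * (N / σ ^ 2) - lam = α⁻¹ * σ := by
  rw [← mul_div_assoc, ← heq, mul_div_cancel_right₀ _ (pow_ne_zero 2 hσ), add_sub_cancel_right]

lemma primal_eq_dual_of_dual_eq (hα : α ≠ 0) (hσ : σ ≠ 0)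
    (heq : (α⁻¹ * σ + lam) * σ ^ 2 = 1 / 2 * N) :
    1 / 2 * α * (1 / 2 * (N / σ ^ 2) - lam) ^ 2 - N / σ
      = -N / (2 * σ) - σ ^ 2 / (2 * α) - lam * σ := by
  rw [half_div_sq_sub_eq_of_dual_eq hσ heq]
  obtain rfl : N = 2 * (α⁻¹ * σ + lam) * σ ^ 2 := by linarith
  field_simp
  ring

end DualAlgebraicEquation

theorem stmt13_general
    (n : ℕ) (α lam : ℝ) (hα : 0 < α)
    (f : EuclideanSpace ℝ (Fin n))
    (Pi : EuclideanSpace ℝ (Fin n) → ℝ)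
    (hPi : ∀ x, Pi x = (1 / 2) * α * ((1 / 2) * ‖x‖ ^ 2 - lam) ^ 2 - ⟪f, x⟫)
    (Pid : ℝ → ℝ)
    (hPid : ∀ σ : ℝ, σ ≠ 0 → Pid σ = -‖f‖ ^ 2 / (2 * σ) - σ ^ 2 / (2 * α) - lam * σ)
    (σ : ℝ) (hσ : σ ≠ 0)
    (heq : (α⁻¹ * σ + lam) * σ ^ 2 = (1 / 2) * ‖f‖ ^ 2) :
    Pi (σ⁻¹ • f) = Pid σ := by
  rw [hPi, hPid σ hσ, norm_inv_smul_sq, inner_inv_smul_self]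
  exact primal_eq_dual_of_dual_eq hα.ne' hσ heq

/-- Complementary-dual equality for the example: if `σ ≠ 0` solves the
dual algebraic equation `(α⁻¹σ + λ)σ² = ½‖f‖²`, then `Π(σ⁻¹f) = Π^d(σ)`, where
`Π^d(σ) = −‖f‖²/(2σ) − σ²/(2α) − λσ`. -/
theorem stmt13
    (n : ℕ) (α lam : ℝ) (hα : 0 < α) (hlam : 0 < lam)
    (f : EuclideanSpace ℝ (Fin n))
    (Pi : EuclideanSpace ℝ (Fin n) → ℝ)
    (hPi : ∀ x, Pi x = (1 / 2) * α * ((1 / 2) * ‖x‖ ^ 2 - lam) ^ 2 - ⟪f, x⟫)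
    (Pid : ℝ → ℝ)
    (hPid : ∀ σ : ℝ, σ ≠ 0 → Pid σ = -‖f‖ ^ 2 / (2 * σ) - σ ^ 2 / (2 * α) - lam * σ)
    (σ : ℝ) (hσ : σ ≠ 0)
    (heq : (α⁻¹ * σ + lam) * σ ^ 2 = (1 / 2) * ‖f‖ ^ 2) :
    Pi (σ⁻¹ • f) = Pid σ :=
  stmt13_general n α lam hα f Pi hPi Pid hPid σ hσ heq
end

section
/- (Strong duality for the example.) Let α > 0, λ > 0, and f ∈ ℝⁿ with f ≠ 0. Then there exists a unique σ₁ > 0 satisfying (α⁻¹σ + λ)σ² = ½‖f‖²; moreover σ₁ is the unique global maximizer of Π^d(σ) = −‖f‖²/(2σ) − σ²/(2α) − λσ on (0,∞), and min_{x ∈ ℝⁿ} Π(x) = Π^d(σ₁), where Π(x) = ½ α (½‖x‖² − λ)² − fᵀx. -/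
open scoped RealInnerProductSpace

/-!
The root `σ₁` exists and is unique because `σ ↦ (α⁻¹σ + λ)σ²` increases strictly from `0` to `∞`
on `[0, ∞)`. Eliminating `‖f‖²` with the root equation turns `Π^d(σ₁) - Π^d(σ)` into
`(σ₁ - σ)² (2σ₁ + σ + 2αλ) / (2ασ)`. For the primal side, Cauchy–Schwarz bounds `Π(x)` below by
the radial function `R(t) = ½α(½t² - λ)² - ‖f‖t` at `t = ‖x‖`, and
`R(t) - Π^d(σ₁) = (σ₁t - ‖f‖)² (α(σ₁t + ‖f‖)² + 4σ₁³) / (8σ₁⁴)`; both bounds are sharp at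
`x = σ₁⁻¹ f`.
-/

/-- `φ` stands for `‖f‖²`. -/
noncomputable def dualEnergy (α lam φ σ : ℝ) : ℝ :=
  -φ / (2 * σ) - σ ^ 2 / (2 * α) - lam * σ

noncomputable def radialEnergy (α lam F t : ℝ) : ℝ :=
  (1 / 2) * α * ((1 / 2) * t ^ 2 - lam) ^ 2 - F * t

section Root

variable {α lam : ℝ}

theorem strictMonoOn_cubic (hα : 0 < α) (hlam : 0 ≤ lam) :
    StrictMonoOn (fun σ : ℝ => (α⁻¹ * σ + lam) * σ ^ 2) (Set.Ici 0) := by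
  intro σ hσ τ _ hlt
  have hsq : σ ^ 2 < τ ^ 2 := pow_lt_pow_left₀ hlt hσ two_ne_zero
  have hcube : σ ^ 3 < τ ^ 3 := pow_lt_pow_left₀ hlt hσ three_ne_zero
  have hinv : 0 < α⁻¹ := inv_pos.mpr hα
  simp only
  nlinarith [mul_lt_mul_of_pos_left hcube hinv, mul_le_mul_of_nonneg_left hsq.le hlam]

theorem exists_pos_cubic_eq (hα : 0 < α) (hlam : 0 ≤ lam) {c : ℝ} (hc : 0 < c) :
    ∃ σ, 0 < σ ∧ (α⁻¹ * σ + lam) * σ ^ 2 = c := by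
  set M := 1 + α * c
  have hM : 1 ≤ M := by have := mul_pos hα hc; linarith
  have hcM : c ≤ (α⁻¹ * M + lam) * M ^ 2 := by
    have hαM : α⁻¹ * M = α⁻¹ + c := by field_simp [M]; ring
    have hM2 : 1 ≤ M ^ 2 := one_le_pow₀ hM
    have : 0 ≤ α⁻¹ := (inv_pos.mpr hα).le
    nlinarith
  obtain ⟨σ, hσ, hroot⟩ := intermediate_value_Icc (by linarith : (0 : ℝ) ≤ M)
    (by fun_prop : ContinuousOn (fun σ : ℝ => (α⁻¹ * σ + lam) * σ ^ 2) (Set.Icc 0 M))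
    (⟨by simpa using hc.le, hcM⟩ : c ∈ Set.Icc _ _)
  refine ⟨σ, lt_of_le_of_ne hσ.1 ?_, hroot⟩
  rintro rfl
  linarith [show (α⁻¹ * 0 + lam) * (0 : ℝ) ^ 2 = 0 by ring]

end Root

section Dual

variable {α lam φ σ₁ : ℝ}

theorem dualEnergy_sub_dualEnergy (hα : α ≠ 0)
    (hroot : (α⁻¹ * σ₁ + lam) * σ₁ ^ 2 = (1 / 2) * φ) {σ : ℝ} (hσ : σ ≠ 0) :
    dualEnergy α lam φ σ₁ - dualEnergy α lam φ σ
      = (σ₁ - σ) ^ 2 * (2 * σ₁ + σ + 2 * α * lam) / (2 * α * σ) := by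
  have hφ : φ = 2 * α⁻¹ * σ₁ ^ 3 + 2 * lam * σ₁ ^ 2 := by linear_combination (-2 : ℝ) * hroot
  simp only [dualEnergy, hφ]
  field_simp
  ring

theorem dualEnergy_lt_of_root (hα : 0 < α) (hlam : 0 ≤ lam) (hσ₁ : 0 < σ₁)
    (hroot : (α⁻¹ * σ₁ + lam) * σ₁ ^ 2 = (1 / 2) * φ) {σ : ℝ} (hσ : 0 < σ) (hne : σ ≠ σ₁) :
    dualEnergy α lam φ σ < dualEnergy α lam φ σ₁ := by
  have hgap := dualEnergy_sub_dualEnergy hα.ne' hroot hσ.ne'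
  have hsq : 0 < (σ₁ - σ) ^ 2 := sq_pos_of_ne_zero (sub_ne_zero.mpr hne.symm)
  have hpos : 0 < (σ₁ - σ) ^ 2 * (2 * σ₁ + σ + 2 * α * lam) / (2 * α * σ) := by
    have hαlam : 0 ≤ α * lam := mul_nonneg hα.le hlam
    apply div_pos (mul_pos hsq (by linarith)) (by positivity)
  linarith

end Dual

section Primal

variable {α lam σ₁ F : ℝ}

theorem radialEnergy_sub_dualEnergy (hσ₁ : σ₁ ≠ 0) (hα : α ≠ 0)
    (hroot : (α⁻¹ * σ₁ + lam) * σ₁ ^ 2 = (1 / 2) * F ^ 2) (t : ℝ) :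
    radialEnergy α lam F t - dualEnergy α lam (F ^ 2) σ₁
      = (σ₁ * t - F) ^ 2 * (α * (σ₁ * t + F) ^ 2 + 4 * σ₁ ^ 3) / (8 * σ₁ ^ 4) := by
  have hlam : lam = F ^ 2 / (2 * σ₁ ^ 2) - σ₁ / α := by
    rw [eq_sub_iff_add_eq, eq_div_iff (by positivity)]
    linear_combination 2 * hroot
  simp only [radialEnergy, dualEnergy, hlam]
  field_simp
  ring

theorem dualEnergy_le_radialEnergy (hα : 0 < α) (hσ₁ : 0 < σ₁)
    (hroot : (α⁻¹ * σ₁ + lam) * σ₁ ^ 2 = (1 / 2) * F ^ 2) (t : ℝ) :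
    dualEnergy α lam (F ^ 2) σ₁ ≤ radialEnergy α lam F t := by
  have hgap := radialEnergy_sub_dualEnergy hσ₁.ne' hα.ne' hroot t
  have hpos : 0 ≤ (σ₁ * t - F) ^ 2 * (α * (σ₁ * t + F) ^ 2 + 4 * σ₁ ^ 3) / (8 * σ₁ ^ 4) := by
    positivity
  linarith

theorem radialEnergy_div_eq_dualEnergy (hα : α ≠ 0) (hσ₁ : σ₁ ≠ 0)
    (hroot : (α⁻¹ * σ₁ + lam) * σ₁ ^ 2 = (1 / 2) * F ^ 2) :
    radialEnergy α lam F (F / σ₁) = dualEnergy α lam (F ^ 2) σ₁ := by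
  have := radialEnergy_sub_dualEnergy hσ₁ hα hroot (F / σ₁)
  rw [mul_div_cancel₀ F hσ₁, sub_self, zero_pow two_ne_zero, zero_mul, zero_div] at this
  linarith

theorem isLeast_range_primalEnergy {E : Type*} [NormedAddCommGroup E] [InnerProductSpace ℝ E]
    (f : E) (hα : 0 < α) (hσ₁ : 0 < σ₁)
    (hroot : (α⁻¹ * σ₁ + lam) * σ₁ ^ 2 = (1 / 2) * ‖f‖ ^ 2) :
    IsLeast (Set.range fun x : E => (1 / 2) * α * ((1 / 2) * ‖x‖ ^ 2 - lam) ^ 2 - ⟪f, x⟫)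
      (dualEnergy α lam (‖f‖ ^ 2) σ₁) := by
  constructor
  · refine ⟨σ₁⁻¹ • f, ?_⟩
    have hnorm : ‖σ₁⁻¹ • f‖ = ‖f‖ / σ₁ := by
      rw [norm_smul, Real.norm_of_nonneg (inv_nonneg.mpr hσ₁.le), inv_mul_eq_div]
    have hinner : ⟪f, σ₁⁻¹ • f⟫ = ‖f‖ * (‖f‖ / σ₁) := by
      rw [real_inner_smul_right, real_inner_self_eq_norm_sq]; ring
    show (1 / 2) * α * ((1 / 2) * ‖σ₁⁻¹ • f‖ ^ 2 - lam) ^ 2 - ⟪f, σ₁⁻¹ • f⟫ = _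
    rw [hnorm, hinner]
    exact radialEnergy_div_eq_dualEnergy hα.ne' hσ₁.ne' hroot
  · rintro _ ⟨x, rfl⟩
    calc dualEnergy α lam (‖f‖ ^ 2) σ₁ ≤ radialEnergy α lam ‖f‖ ‖x‖ :=
          dualEnergy_le_radialEnergy hα hσ₁ hroot ‖x‖
      _ ≤ _ := by
          simp only [radialEnergy]
          linarith [real_inner_le_norm f x]

end Primal

/-- Strong duality for the example: for `f ≠ 0` there is a unique
`σ₁ > 0` solving `(α⁻¹σ + λ)σ² = ½‖f‖²`; it is the unique global maximizer of
`Π^d` on `(0,∞)`, and `min_{x ∈ ℝⁿ} Π(x) = Π^d(σ₁)`. -/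
theorem stmt16
    (n : ℕ) (α lam : ℝ) (hα : 0 < α) (hlam : 0 < lam)
    (f : EuclideanSpace ℝ (Fin n)) (hf : f ≠ 0)
    (Pi : EuclideanSpace ℝ (Fin n) → ℝ)
    (hPi : ∀ x, Pi x = (1 / 2) * α * ((1 / 2) * ‖x‖ ^ 2 - lam) ^ 2 - ⟪f, x⟫)
    (Pid : ℝ → ℝ)
    (hPid : ∀ σ : ℝ, σ ≠ 0 → Pid σ = -‖f‖ ^ 2 / (2 * σ) - σ ^ 2 / (2 * α) - lam * σ) :
    ∃ σ₁ : ℝ, 0 < σ₁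
      ∧ (α⁻¹ * σ₁ + lam) * σ₁ ^ 2 = (1 / 2) * ‖f‖ ^ 2
      -- uniqueness of the positive root
      ∧ (∀ σ : ℝ, 0 < σ → (α⁻¹ * σ + lam) * σ ^ 2 = (1 / 2) * ‖f‖ ^ 2 → σ = σ₁)
      -- σ₁ is a global maximizer of Π^d on (0,∞)
      ∧ (∀ σ : ℝ, 0 < σ → Pid σ ≤ Pid σ₁)
      -- and it is the unique such maximizer
      ∧ (∀ σ : ℝ, 0 < σ → Pid σ = Pid σ₁ → σ = σ₁)
      -- strong duality: the minimum of Π over ℝⁿ equals Π^d(σ₁)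
      ∧ IsLeast (Set.range Pi) (Pid σ₁) := by
  have hc : 0 < (1 / 2) * ‖f‖ ^ 2 := by have := norm_pos_iff.mpr hf; positivity
  obtain ⟨σ₁, hσ₁, hroot⟩ := exists_pos_cubic_eq hα hlam.le hc
  have hPid' : ∀ σ, 0 < σ → Pid σ = dualEnergy α lam (‖f‖ ^ 2) σ :=
    fun σ hσ => hPid σ hσ.ne'
  have hlt : ∀ σ, 0 < σ → σ ≠ σ₁ → Pid σ < Pid σ₁ := fun σ hσ hne => by
    rw [hPid' σ hσ, hPid' σ₁ hσ₁]
    exact dualEnergy_lt_of_root hα hlam.le hσ₁ hroot hσ hne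
  refine ⟨σ₁, hσ₁, hroot, fun σ hσ hσroot => ?_, fun σ hσ => ?_, fun σ hσ heq => ?_, ?_⟩
  · exact strictMonoOn_cubic hα hlam.le |>.injOn (Set.mem_Ici.mpr hσ.le)
      (Set.mem_Ici.mpr hσ₁.le) (hσroot.trans hroot.symm)
  · rcases eq_or_ne σ σ₁ with rfl | hne
    exacts [le_rfl, (hlt σ hσ hne).le]
  · by_contra hne
    exact (hlt σ hσ hne).ne heq
  · rw [hPid' σ₁ hσ₁, show Pi = _ from funext hPi]
    exact isLeast_range_primalEnergy f hα hσ₁ hroot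
end
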